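/- Categorical products in Dir agree with the algebraic product of Dirichlet polynomials: for finite coproducts of representable presheaves D = ∐_{i ∈ I} Fin(–, dᵢ) and E = ∐_{j ∈ J} Fin(–, eⱼ), the product D × E in the functor category FintypeCatᵒᵖ ⥤ FintypeCat is isomorphic to ∐_{(i,j) ∈ I × J} Fin(–, dᵢ × eⱼ); in particular the product of two Dirichlet functors is again a Dirichlet functor. -/

import Mathlib

/- STATEMENT 16: Categorical products in `Dir` agree with the algebraic product of Dirichlet
polynomials: for `D = ∐_{i ∈ I} Fin(–, dᵢ)` and `E = ∐_{j ∈ J} Fin(–, eⱼ)`, the product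
`D × E` in the functor category `FintypeCatᵒᵖ ⥤ FintypeCat` is isomorphic to
`∐_{(i,j) ∈ I × J} Fin(–, dᵢ × eⱼ)`; in particular the product of two Dirichlet functors is
again a Dirichlet functor. -/

open CategoryTheory CategoryTheory.Limits Opposite

noncomputable section

noncomputable instance (X Y : FintypeCat.{0}) : Fintype (X ⟶ Y) := by
  classical exact (Fintype.ofFinite (X ⟶ Y))

/-- The finite coproduct `∐ᵢ Fin(–, dᵢ)` of representable presheaves `FintypeCatᵒᵖ ⥤ FintypeCat`. -/
def dirichletSum {I : Type} [Fintype I] (d : I → FintypeCat.{0}) :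
    FintypeCat.{0}ᵒᵖ ⥤ FintypeCat.{0} where
  obj X := FintypeCat.of (Σ i, (X.unop ⟶ d i))
  map f := FintypeCat.homMk (fun x => ⟨x.1, f.unop ≫ x.2⟩)

/-- A Dirichlet functor is a finite coproduct of representable presheaves. -/
def IsDirichlet (D : FintypeCat.{0}ᵒᵖ ⥤ FintypeCat.{0}) : Prop :=
  ∃ (I : Type) (_ : Fintype I) (d : I → FintypeCat.{0}), Nonempty (D ≅ dirichletSum d)

/-!
A pair of elements `(i, f : X ⟶ dᵢ)` and `(j, g : X ⟶ eⱼ)` of `D(X)` and `E(X)` is the same thing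
as the index `(i, j)` together with the map `⟨f, g⟩ : X ⟶ dᵢ × eⱼ`, naturally in `X`. So the sum
over `I × J` with the two componentwise projections is a product cone, and the product of two
Dirichlet functors is a Dirichlet functor because products are invariant under isomorphism.
-/

namespace dirichletSum

variable {I J : Type} [Fintype I] [Fintype J] (d : I → FintypeCat.{0}) (e : J → FintypeCat.{0})

abbrev prodFamily : I × J → FintypeCat.{0} := fun ij => FintypeCat.of (d ij.1 × e ij.2)

variable {d e} {X : FintypeCat.{0}ᵒᵖ}

def pair (a : (dirichletSum d).obj X) (b : (dirichletSum e).obj X) :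
    (dirichletSum (prodFamily d e)).obj X :=
  ⟨(a.1, b.1), FintypeCat.homMk fun y => (a.2 y, b.2 y)⟩

lemma map_pair {Y : FintypeCat.{0}ᵒᵖ} (f : X ⟶ Y) (a : (dirichletSum d).obj X)
    (b : (dirichletSum e).obj X) :
    (dirichletSum (prodFamily d e)).map f (pair a b) =
      pair ((dirichletSum d).map f a) ((dirichletSum e).map f b) :=
  rfl

variable (d e)

def fst : dirichletSum (prodFamily d e) ⟶ dirichletSum d where
  app X := FintypeCat.homMk fun x => ⟨x.1.1, FintypeCat.homMk fun y => (x.2 y).1⟩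

def snd : dirichletSum (prodFamily d e) ⟶ dirichletSum e where
  app X := FintypeCat.homMk fun x => ⟨x.1.2, FintypeCat.homMk fun y => (x.2 y).2⟩

variable {d e}

lemma pair_fst_snd (z : (dirichletSum (prodFamily d e)).obj X) :
    pair ((fst d e).app X z) ((snd d e).app X z) = z :=
  rfl

def lift (s : BinaryFan (dirichletSum d) (dirichletSum e)) :
    s.pt ⟶ dirichletSum (prodFamily d e) where
  app X := FintypeCat.homMk fun x => pair (s.fst.app X x) (s.snd.app X x)
  naturality X Y f := by
    ext x
    have hfst : s.fst.app Y (s.pt.map f x) = (dirichletSum d).map f (s.fst.app X x) :=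
      ConcreteCategory.congr_hom (s.fst.naturality f) x
    have hsnd : s.snd.app Y (s.pt.map f x) = (dirichletSum e).map f (s.snd.app X x) :=
      ConcreteCategory.congr_hom (s.snd.naturality f) x
    exact (congrArg₂ pair hfst hsnd).trans (map_pair f _ _).symm

variable (d e)

def binaryFanIsLimit : IsLimit (BinaryFan.mk (fst d e) (snd d e)) :=
  BinaryFan.isLimitMk lift (fun _ => rfl) (fun _ => rfl) fun s m hfst hsnd => by
    ext X x
    have hfst : (fst d e).app X (m.app X x) = s.fst.app X x :=
      ConcreteCategory.congr_hom (NatTrans.congr_app hfst X) x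
    have hsnd : (snd d e).app X (m.app X x) = s.snd.app X x :=
      ConcreteCategory.congr_hom (NatTrans.congr_app hsnd X) x
    exact (pair_fst_snd _).symm.trans (congrArg₂ pair hfst hsnd)

def prodIso : dirichletSum d ⨯ dirichletSum e ≅ dirichletSum (prodFamily d e) :=
  limit.isoLimitCone ⟨_, binaryFanIsLimit d e⟩

end dirichletSum

open dirichletSum in
lemma IsDirichlet.prod {D E : FintypeCat.{0}ᵒᵖ ⥤ FintypeCat.{0}} :
    IsDirichlet D → IsDirichlet E → IsDirichlet (D ⨯ E) := by
  rintro ⟨I, _, d, ⟨φ⟩⟩ ⟨J, _, e, ⟨ψ⟩⟩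
  exact ⟨I × J, inferInstance, prodFamily d e,
    ⟨(HasLimit.isoOfNatIso (mapPairIso φ ψ)).trans (prodIso d e)⟩⟩

theorem dirichlet_products
    {I J : Type} [Fintype I] [Fintype J] (d : I → FintypeCat.{0}) (e : J → FintypeCat.{0}) :
    Nonempty
      (dirichletSum d ⨯ dirichletSum e ≅
        dirichletSum (fun ij : I × J => FintypeCat.of (d ij.1 × e ij.2))) ∧
    ∀ (D E : FintypeCat.{0}ᵒᵖ ⥤ FintypeCat.{0}),
      IsDirichlet D → IsDirichlet E → IsDirichlet (D ⨯ E) :=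
  ⟨⟨dirichletSum.prodIso d e⟩, fun _ _ => IsDirichlet.prod⟩
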